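/- Let U be a regular subgroup of G contained in S_h × S_n × {id}, let (p^j)_{j ∈ P^U} be a system of representatives of the U-orbits of P, and let C be a U-consistent social choice correspondence. Then the number of resolute U-consistent refinements of C equals the product over all U-orbits j of |C(p^j)|; in particular, C admits at least one resolute U-consistent refinement. -/
import Mathlib


/-!
Common framework: preferences on `n ≥ 2` alternatives (`Fin n`) expressed by `h ≥ 2`
individuals (`Fin h`).  Following the paper, a linear order `q ∈ L(N)` is identified with
the permutation of `Fin n` sending each rank position (`0` = best) to the alternative
occupying that position.
-/

/-- A preference relation (a linear order on the set `Fin n` of alternatives), identified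
with the permutation sending each rank position (`0` = best) to the alternative at
that position. -/
abbrev Pref (n : ℕ) := Equiv.Perm (Fin n)

/-- `x ⪰_q y` : alternative `x` is weakly preferred to `y` in `q`. -/
def prefGE {n : ℕ} (q : Pref n) (x y : Fin n) : Prop := q.symm x ≤ q.symm y

/-- `x ≻_q y` : alternative `x` is strictly preferred to `y` in `q`. -/
def prefGT {n : ℕ} (q : Pref n) (x y : Fin n) : Prop := q.symm x < q.symm y

instance {n : ℕ} (q : Pref n) (x y : Fin n) : Decidable (prefGT q x y) :=
  inferInstanceAs (Decidable (q.symm x < q.symm y))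

/-- A preference profile: one preference relation for each individual. -/
abbrev Profile (n h : ℕ) := Fin h → Pref n

/-- A social choice correspondence (the nonemptiness of its values is `IsSCC`). -/
abbrev SCC (n h : ℕ) := Profile n h → Set (Fin n)

/-- `C` has nonempty values, i.e. `C` really is a social choice correspondence. -/
def IsSCC {n h : ℕ} (C : SCC n h) : Prop := ∀ p, (C p).Nonempty

/-- `C` is resolute: it always selects exactly one alternative. -/
def Resolute {n h : ℕ} (C : SCC n h) : Prop := ∀ p, ∃ x, C p = {x}

/-- `C'` is a refinement of `C`. -/
def Refines {n h : ℕ} (C' C : SCC n h) : Prop := ∀ p, C' p ⊆ C p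

/-- The order-reversing permutation `ρ₀ : r ↦ n - r + 1`. -/
def rho0 (n : ℕ) : Equiv.Perm (Fin n) := Fin.revPerm

/-- The profile `p^{(id,id,ρ₀)}` obtained from `p` by reversing every individual
preference. -/
def revProfile {n h : ℕ} (p : Profile n h) : Profile n h := fun i => p i * rho0 n

/-- `C` is immune to the reversal bias. -/
def Immune {n h : ℕ} (C : SCC n h) : Prop :=
  ∀ (p : Profile n h) (x : Fin n), C p = {x} → C (revProfile p) ≠ C p

/-- `Y` is a partition: nonempty, pairwise disjoint, covering blocks. -/
def IsPartition {α : Type*} {s : ℕ} (Y : Fin s → Finset α) : Prop :=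
  (∀ j, (Y j).Nonempty) ∧ (∀ j k, j ≠ k → Disjoint (Y j) (Y k)) ∧ (∀ a, ∃ j, a ∈ Y j)

/-- The ambient group `S_h × S_n × S_n` (the third component is meant to range in `Ω`). -/
abbrev Amb (n h : ℕ) := Equiv.Perm (Fin h) × Equiv.Perm (Fin n) × Equiv.Perm (Fin n)

/-- The action `p ↦ p^g` of `g = (φ,ψ,ρ)` on profiles. -/
def gact {n h : ℕ} (g : Amb n h) (p : Profile n h) : Profile n h :=
  fun i => g.2.1 * p (g.1⁻¹ i) * g.2.2

/-- The group `Ω = {id, ρ₀}`. -/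
def OmegaGrp (n : ℕ) : Subgroup (Equiv.Perm (Fin n)) := Subgroup.zpowers (rho0 n)

/-- The group `G = S_h × S_n × Ω`. -/
def bigG (n h : ℕ) : Subgroup (Amb n h) :=
  (⊤ : Subgroup (Equiv.Perm (Fin h))).prod
    ((⊤ : Subgroup (Equiv.Perm (Fin n))).prod (OmegaGrp n))

/-- `U`-consistency of a social choice correspondence `C`: for every `p` and every
`(φ,ψ,ρ) ∈ U`, if `ρ = id` then `C(p^{(φ,ψ,id)}) = ψ C(p)`, and if `ρ = ρ₀` and
`|C(p)| = 1` then `C(p^{(φ,ψ,ρ₀)}) ≠ ψ C(p)`. -/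
def UConsistent {n h : ℕ} (U : Subgroup (Amb n h)) (C : SCC n h) : Prop :=
  ∀ (p : Profile n h), ∀ g ∈ U,
    (g.2.2 = 1 → C (gact g p) = g.2.1 '' C p) ∧
    (g.2.2 = rho0 n → ∀ x : Fin n, C p = {x} → C (gact g p) ≠ g.2.1 '' C p)

/-- A subgroup `U` of `G` is regular: for every profile `p` there is `ψ⋆ ∈ S_n`
conjugate to `ρ₀` with `Stab_U(p) ⊆ (S_h × {id} × {id}) ∪ (S_h × {ψ⋆} × {ρ₀})`. -/
def RegularSubgroup {n h : ℕ} (U : Subgroup (Amb n h)) : Prop :=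
  ∀ p : Profile n h, ∃ ψs : Equiv.Perm (Fin n), IsConj (rho0 n) ψs ∧
    ∀ g ∈ U, gact g p = p →
      (g.2.1 = 1 ∧ g.2.2 = 1) ∨ (g.2.1 = ψs ∧ g.2.2 = rho0 n)

/-- `p` and `q` lie in the same `U`-orbit. -/
def SameOrbit {n h : ℕ} (U : Subgroup (Amb n h)) (p q : Profile n h) : Prop :=
  ∃ g ∈ U, gact g p = q

/-- `S` is a system of representatives of the `U`-orbits: every profile is in the
orbit of exactly one element of `S`. -/
def IsRepSystem {n h : ℕ} (U : Subgroup (Amb n h)) (S : Set (Profile n h)) : Prop :=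
  ∀ p : Profile n h, ∃! r, r ∈ S ∧ SameOrbit U r p

/-- The stabilizer of `r` in `U` is contained in `S_h × S_n × {id}` (i.e. the
`U`-orbit of `r` belongs to `P₁ᵁ`). -/
def StabIn1 {n h : ℕ} (U : Subgroup (Amb n h)) (r : Profile n h) : Prop :=
  ∀ g ∈ U, gact g r = r → g.2.2 = 1

section Aux11
variable {n h : ℕ}

lemma rho0_ne_one' (hn : 2 ≤ n) : rho0 n ≠ 1 := by
  intro hc
  have h0 : (0:ℕ) < n := by omega
  have h1 := congrArg (fun e : Equiv.Perm (Fin n) => e ⟨0, h0⟩) hc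
  simp only [rho0, Fin.revPerm_apply, Equiv.Perm.coe_one, id_eq] at h1
  have := congrArg Fin.val h1
  simp [Fin.rev] at this
  omega

lemma gact_one' (p : Profile n h) : gact 1 p = p := by
  funext i; simp [gact]

lemma gact_mul1 {g g' : Amb n h} (h1 : g.2.2 = 1) (h2 : g'.2.2 = 1)
    (p : Profile n h) : gact (g * g') p = gact g (gact g' p) := by
  funext i
  simp [gact, h1, h2, Prod.fst_mul, Prod.snd_mul, mul_assoc, mul_inv_rev,
    Equiv.Perm.mul_apply]

lemma gact_inv' (g : Amb n h) (p : Profile n h) : gact g⁻¹ (gact g p) = p := by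
  funext i
  simp [gact, mul_assoc]

end Aux11
lemma stab_psi_one' {n h : ℕ} (hn : 2 ≤ n) {U : Subgroup (Amb n h)}
    (hreg : RegularSubgroup U) (hU1 : ∀ g ∈ U, g.2.2 = 1)
    {g : Amb n h} (hg : g ∈ U) {p : Profile n h} (hfix : gact g p = p) :
    g.2.1 = 1 := by
  obtain ⟨ψs, -, hst⟩ := hreg p
  rcases hst g hg hfix with ⟨h1, -⟩ | ⟨-, h2⟩
  · exact h1
  · have := hU1 g hg
    rw [h2] at this
    exact absurd this (rho0_ne_one' hn)

lemma psi_eq' {n h : ℕ} (hn : 2 ≤ n) {U : Subgroup (Amb n h)}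
    (hreg : RegularSubgroup U) (hU1 : ∀ g ∈ U, g.2.2 = 1)
    {g g' : Amb n h} (hg : g ∈ U) (hg' : g' ∈ U) {r : Profile n h}
    (heq : gact g r = gact g' r) : g.2.1 = g'.2.1 := by
  have hmem : g'⁻¹ * g ∈ U := mul_mem (inv_mem hg') hg
  have hinv2 : (g'⁻¹ : Amb n h).2.2 = 1 := by
    rw [show (g'⁻¹ : Amb n h).2.2 = (g'.2.2)⁻¹ from rfl, hU1 g' hg', inv_one]
  have hfix : gact (g'⁻¹ * g) r = r := by
    rw [gact_mul1 hinv2 (hU1 g hg), heq, gact_inv']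
  have h1 : g'.2.1⁻¹ * g.2.1 = 1 := stab_psi_one' hn hreg hU1 hmem hfix
  exact (inv_mul_eq_one.mp h1).symm

lemma singleton_choose' {α : Type*} {s : Set α} {a : α} (hs : s = {a})
    (hex : ∃ x, s = {x}) : hex.choose = a := by
  exact (Set.singleton_eq_singleton_iff.mp (hs.symm.trans hex.choose_spec)).symm
/-- Theorem `fu-min-2`: given a regular `U ≤ S_h × S_n × {id}`, a system
of representatives `S` of the `U`-orbits and a `U`-consistent scc `C`, the number of
resolute `U`-consistent refinements of `C` is `∏_{r ∈ S} |C r|`; in particular there is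
at least one. -/
theorem statement11 {n h : ℕ} (hh : 2 ≤ h) (hn : 2 ≤ n)
    (U : Subgroup (Amb n h)) (hreg : RegularSubgroup U)
    (hU1 : ∀ g ∈ U, g.2.2 = 1)
    (S : Finset (Profile n h)) (hS : IsRepSystem U ↑S)
    (C : SCC n h) (hC : IsSCC C) (hcons : UConsistent U C) :
    Nat.card {f : SCC n h // Resolute f ∧ Refines f C ∧ UConsistent U f} =
        ∏ r ∈ S, (C r).ncard ∧
      ∃ f : SCC n h, Resolute f ∧ Refines f C ∧ UConsistent U f := by
  classical
  choose rep hrep using hS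
  choose gm hgmU hgm using fun p => (hrep p).1.2
  have hrepS : ∀ p, rep p ∈ S := fun p => (hrep p).1.1
  have huniq : ∀ p q, q ∈ S → SameOrbit U q p → q = rep p :=
    fun p q hq ho => (hrep p).2 q ⟨hq, ho⟩
  have hrep_self : ∀ r ∈ S, rep r = r := fun r hr =>
    (huniq r r hr ⟨1, one_mem U, gact_one' r⟩).symm
  have hrep_g : ∀ p, ∀ g ∈ U, rep (gact g p) = rep p := by
    intro p g hg
    refine (huniq (gact g p) (rep p) (hrepS p)
      ⟨g * gm p, mul_mem hg (hgmU p), ?_⟩).symm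
    rw [gact_mul1 (hU1 g hg) (hU1 _ (hgmU p)), hgm p]
  -- the resolute refinement determined by a selection c
  set F : (Profile n h → Fin n) → SCC n h :=
    fun c p => {(gm p).2.1 (c (rep p))} with hF
  have hFval : ∀ c p, ∀ g ∈ U, gact g (rep p) = p →
      F c p = {g.2.1 (c (rep p))} := by
    intro c p g hg hgp
    have hψ : (gm p).2.1 = g.2.1 :=
      psi_eq' hn hreg hU1 (hgmU p) hg (by rw [hgm p, hgp])
    rw [hF]
    simp only [hψ]
  have hFS : ∀ c, ∀ r ∈ S, F c r = {c r} := by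
    intro c r hr
    have h1 := hFval c r 1 (one_mem U) (by rw [hrep_self r hr]; exact gact_one' r)
    rw [h1, hrep_self r hr]
    simp
  have hFeq : ∀ c p g, g ∈ U → F c (gact g p) = g.2.1 '' F c p := by
    intro c p g hg
    have h1 : rep (gact g p) = rep p := hrep_g p g hg
    have h2 : gact (g * gm p) (rep (gact g p)) = gact g p := by
      rw [h1, gact_mul1 (hU1 g hg) (hU1 _ (hgmU p)), hgm p]
    rw [hFval c (gact g p) (g * gm p) (mul_mem hg (hgmU p)) h2, h1, hF]
    rw [Set.image_singleton]
    congr 1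
  have hFcons : ∀ c, UConsistent U (F c) := by
    intro c p g hg
    refine ⟨fun _ => hFeq c p g hg, fun h2 => ?_⟩
    have := hU1 g hg
    rw [h2] at this
    exact absurd this (rho0_ne_one' hn)
  have hFref : ∀ c, (∀ p, c p ∈ C p) → Refines (F c) C := by
    intro c hc p x hx
    have hCp : C p = (gm p).2.1 '' C (rep p) := by
      have h1 := (hcons (rep p) (gm p) (hgmU p)).1 (hU1 _ (hgmU p))
      rw [hgm p] at h1
      exact h1
    rw [Set.mem_singleton_iff] at hx
    subst hx
    rw [hCp]
    exact ⟨c (rep p), hc (rep p), rfl⟩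
  -- the selection extension
  set ext : (∀ r : {x // x ∈ S}, {a : Fin n // a ∈ C r.1}) → Profile n h → Fin n :=
    fun c p => if hp : p ∈ S then (c ⟨p, hp⟩ : Fin n) else (hC p).choose with hext
  have hext_mem : ∀ c p, ext c p ∈ C p := by
    intro c p
    simp only [hext]
    split
    · rename_i hp
      exact (c ⟨p, hp⟩).2
    · exact (hC p).choose_spec
  have hextS : ∀ c (r : {x // x ∈ S}), ext c r.1 = (c r : Fin n) := by
    intro c r
    simp only [hext]
    rw [dif_pos r.2]
  have hsel : ∀ (f : {f : SCC n h // Resolute f ∧ Refines f C ∧ UConsistent U f})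
      (r : {x // x ∈ S}), (f.2.1 r.1).choose ∈ C r.1 := by
    intro f r
    have hspec := (f.2.1 r.1).choose_spec
    exact f.2.2.1 r.1 ((Set.ext_iff.mp hspec _).mpr rfl)
  have e : (∀ r : {x // x ∈ S}, {a : Fin n // a ∈ C r.1}) ≃
      {f : SCC n h // Resolute f ∧ Refines f C ∧ UConsistent U f} := by
    refine
      { toFun := fun c => ⟨F (ext c), fun p => ⟨(gm p).2.1 (ext c (rep p)), rfl⟩,
          hFref _ (hext_mem c), hFcons _⟩
        invFun := fun f r => ⟨(f.2.1 r.1).choose, hsel f r⟩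
        left_inv := ?_
        right_inv := ?_ }
    · intro c
      funext r
      apply Subtype.ext
      show Exists.choose _ = (c r : Fin n)
      refine singleton_choose' ?_ _
      show F (ext c) r.1 = {(c r : Fin n)}
      rw [hFS (ext c) r.1 r.2, hextS c r]
    · intro f
      apply Subtype.ext
      funext p
      have hr : rep p ∈ S := hrepS p
      have hx := (f.2.1 (rep p)).choose_spec
      have h2 : f.1 p = {(gm p).2.1 ((f.2.1 (rep p)).choose)} := by
        conv_lhs => rw [← hgm p]
        rw [(f.2.2.2 (rep p) (gm p) (hgmU p)).1 (hU1 _ (hgmU p))]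
        conv_lhs => rw [hx]
        rw [Set.image_singleton]
      show F (ext (fun r => ⟨(f.2.1 r.1).choose, hsel f r⟩)) p = f.1 p
      rw [h2]
      show {(gm p).2.1 (ext (fun r => ⟨(f.2.1 r.1).choose, hsel f r⟩) (rep p))} = _
      have h3 : ext (fun r => ⟨(f.2.1 r.1).choose, hsel f r⟩) (rep p)
          = (f.2.1 (rep p)).choose := by
        simp only [hext]
        rw [dif_pos hr]
      rw [h3]
  constructor
  · rw [← Nat.card_congr e, Nat.card_pi,
      ← Finset.prod_coe_sort S (fun r => (C r).ncard)]
    exact Finset.prod_congr rfl fun r _ => Nat.card_coe_set_eq (C r.1)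
  · obtain ⟨f, hf⟩ := e (fun r => ⟨(hC r.1).choose, (hC r.1).choose_spec⟩)
    exact ⟨f, hf⟩
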